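/- Let S be a numerical semigroup with m(S) − ν(S) ≥ 3 and n_L = 1. Then either n_{L−1} ≥ 4, or else n_{L−1} = 3, m(S) − ν(S) = 3 and ρ ≤ m(S) − 2. -/

import Mathlib

/-!
Write `f = f(S)`, `m = m(S)`, `L = ⌊f/m⌋`, and let `T` be the set of elements of `S` in the
window `(f - m, f)`. A nonzero Apéry element that is not a sum of two nonzero elements of `S` is
a minimal generator other than `m`; as there are `m - 1` nonzero Apéry elements, at least
`m - ν` of them decompose as `w = a + b`, and then `a, b` are Apéry elements below `f`, as
`w ≤ f + m`. Hence `m - ν ≤ binom(k + 1, 2)`, where `k` is the number of nonzero Apéry elements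
below `f`. Distinct Apéry elements lie in distinct residue classes mod `m`, so moving `0` and
these `k` elements into the window by multiples of `m` gives `k + 1 ≤ |T|`. Finally, `n_L = 1`
says that `Lm` is the only element of `S` in `[Lm, f)`; this forces `n_{L-1} = |T|` and
`T ⊆ (f - m, Lm]`, i.e. `|T| ≤ m + 1 - ρ`. If `n_{L-1} ≤ 3`, then `k = 2`, `n_{L-1} = 3`,
`m - ν ≤ 3` and `ρ ≤ m - 2`.
-/

/-- A numerical semigroup: an additive submonoid of `ℕ` (containing `0`, closed under
addition) whose complement in `ℕ` is finite. -/
structure NumericalSemigroup where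
  carrier : Set ℕ
  zero_mem : 0 ∈ carrier
  add_mem : ∀ ⦃a b : ℕ⦄, a ∈ carrier → b ∈ carrier → a + b ∈ carrier
  cofinite : (carrierᶜ : Set ℕ).Finite

namespace NumericalSemigroup

/-- The multiplicity `m(S)`: the smallest positive element of `S`. -/
noncomputable def mult (S : NumericalSemigroup) : ℕ :=
  sInf {s : ℕ | s ∈ S.carrier ∧ 0 < s}

/-- The embedding dimension `ν(S)`: the cardinality of the (unique) minimal system of
generators of `S`, i.e. the least cardinality of a generating set. -/
noncomputable def embdim (S : NumericalSemigroup) : ℕ :=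
  sInf {n : ℕ | ∃ G : Finset ℕ,
    S.carrier = (AddSubmonoid.closure (G : Set ℕ) : Set ℕ) ∧ G.card = n}

/-- The Frobenius number `f(S)`: the largest integer not belonging to `S`. -/
noncomputable def frob (S : NumericalSemigroup) : ℤ :=
  sSup {x : ℤ | ∀ s ∈ S.carrier, (s : ℤ) ≠ x}

/-- `n(S)`: the number of elements of `S` smaller than the Frobenius number. -/
noncomputable def small (S : NumericalSemigroup) : ℕ :=
  {s : ℕ | s ∈ S.carrier ∧ (s : ℤ) < S.frob}.ncard

/-- The type `t(S)`: the number of pseudo-Frobenius numbers of `S`, i.e. integers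
`x ∉ S` such that `x + s ∈ S` for every nonzero `s ∈ S`. -/
noncomputable def typ (S : NumericalSemigroup) : ℕ :=
  {x : ℤ | (∀ s ∈ S.carrier, (s : ℤ) ≠ x) ∧
    ∀ s ∈ S.carrier, 0 < s → ∃ u ∈ S.carrier, (u : ℤ) = x + s}.ncard

/-- The `k`-th interval `I_k = [k·m, (k+1)·m - 1]` (for a given `m`). -/
def interval (m k : ℕ) : Set ℕ := Set.Ico (k * m) ((k + 1) * m)

/-- `n_k`: the number of elements of `S ∩ I_k` smaller than the Frobenius number. -/
noncomputable def nk (S : NumericalSemigroup) (k : ℕ) : ℕ :=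
  {s : ℕ | s ∈ S.carrier ∩ interval S.mult k ∧ (s : ℤ) < S.frob}.ncard

/-- `L = ⌊f(S)/m(S)⌋`. -/
noncomputable def Lindex (S : NumericalSemigroup) : ℤ := S.frob / (S.mult : ℤ)

/-- `ρ = f(S) + 1 - L·m(S)`. -/
noncomputable def rho (S : NumericalSemigroup) : ℤ :=
  S.frob + 1 - S.Lindex * (S.mult : ℤ)

/-- The Apéry set `Ap(S) = {w ∈ S : w - m(S) ∉ S}`. -/
def apery (S : NumericalSemigroup) : Set ℕ :=
  {w : ℕ | w ∈ S.carrier ∧ ∀ u ∈ S.carrier, u + S.mult ≠ w}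

theorem apery_finite (S : NumericalSemigroup) : S.apery.Finite := by
  apply Set.Finite.subset ((Set.finite_Iio S.mult).union (S.cofinite.image (· + S.mult)))
  intro x hx
  by_cases h : x < S.mult
  · exact Or.inl h
  · refine Or.inr ⟨x - S.mult, fun hmem => hx.2 _ hmem (by omega), ?_⟩
    show x - S.mult + S.mult = x
    omega

/-- `w j`: the `(j+1)`-st smallest element of the Apéry set, so that
`Ap(S) = {w 0 < w 1 < ... < w (m-1)}` with `w 0 = 0`. -/
noncomputable def w (S : NumericalSemigroup) (j : ℕ) : ℕ :=
  (S.apery_finite.toFinset.sort (· ≤ ·)).getD j 0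

/-- `ε_j`: the number of `k ∈ {0, ..., L-1}` such that `|I_k ∩ S| = j`. -/
noncomputable def eps (S : NumericalSemigroup) (j : ℕ) : ℕ :=
  {k : ℕ | (k : ℤ) < S.Lindex ∧ (S.carrier ∩ interval S.mult k).ncard = j}.ncard

/-- `η_j`: the number of `k ∈ ℕ` such that `|I_k ∩ S| = j`. -/
noncomputable def eta (S : NumericalSemigroup) (j : ℕ) : ℕ :=
  {k : ℕ | (S.carrier ∩ interval S.mult k).ncard = j}.ncard

end NumericalSemigroup

open Pointwise in
theorem Set.ncard_add_self_le {α : Type*} [AddCommMagma α] {s : Set α} (hs : s.Finite) :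
    (s + s).ncard ≤ (s.ncard + 1).choose 2 := by
  classical
  obtain ⟨t, rfl⟩ := hs.exists_finset_coe
  have hsub : t + t ⊆ t.sym2.image (Sym2.lift ⟨(· + ·), add_comm⟩) := by
    intro x hx
    obtain ⟨a, ha, b, hb, rfl⟩ := Finset.mem_add.mp hx
    exact Finset.mem_image.mpr ⟨s(a, b), Finset.mk_mem_sym2_iff.mpr ⟨ha, hb⟩, rfl⟩
  rw [← Finset.coe_add, Set.ncard_coe_finset, Set.ncard_coe_finset, ← Finset.card_sym2]
  exact (Finset.card_le_card hsub).trans Finset.card_image_le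

namespace NumericalSemigroup

variable (S : NumericalSemigroup)

theorem exists_forall_le_mem : ∃ N, 0 < N ∧ ∀ n, N ≤ n → n ∈ S.carrier := by
  obtain ⟨N, hN⟩ := S.cofinite.bddAbove
  refine ⟨N + 1, N.succ_pos, fun n hn => by_contra fun h => ?_⟩
  have := hN h
  omega

theorem mult_mem_and_pos : S.mult ∈ S.carrier ∧ 0 < S.mult := by
  obtain ⟨N, hN0, hN⟩ := S.exists_forall_le_mem
  exact Nat.sInf_mem (s := {s | s ∈ S.carrier ∧ 0 < s}) ⟨N, hN N le_rfl, hN0⟩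

theorem mult_mem : S.mult ∈ S.carrier := S.mult_mem_and_pos.1

theorem mult_pos : 0 < S.mult := S.mult_mem_and_pos.2

variable {S}

theorem mult_le_of_mem {s : ℕ} (hs : s ∈ S.carrier) (h : 0 < s) : S.mult ≤ s :=
  Nat.sInf_le ⟨hs, h⟩

theorem mul_mem (k : ℕ) {y : ℕ} (hy : y ∈ S.carrier) : k * y ∈ S.carrier := by
  induction k with
  | zero => simpa using S.zero_mem
  | succ k ih => simpa [Nat.succ_mul] using S.add_mem ih hy

theorem bddAbove_gaps : BddAbove {x : ℤ | ∀ s ∈ S.carrier, (s : ℤ) ≠ x} := by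
  obtain ⟨N, -, hN⟩ := S.exists_forall_le_mem
  refine ⟨N, fun x hx => not_lt.mp fun hlt => hx x.toNat (hN _ (by omega)) (by omega)⟩

theorem le_frob {x : ℤ} (hx : ∀ s ∈ S.carrier, (s : ℤ) ≠ x) : x ≤ S.frob :=
  le_csSup bddAbove_gaps hx

theorem exists_frob_eq_natCast (h : 2 ≤ S.mult) : ∃ F : ℕ, S.frob = F := by
  have h1 : (1 : ℤ) ≤ S.frob := le_frob fun s hs hs1 => by
    have := mult_le_of_mem hs (by omega)
    omega
  exact ⟨S.frob.toNat, by omega⟩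

variable {F : ℕ}

theorem natCast_frob_not_mem (hF : S.frob = F) : F ∉ S.carrier := fun hmem =>
  Int.csSup_mem ⟨-1, fun _ _ => by omega⟩ bddAbove_gaps F hmem hF.symm

theorem mem_of_frob_lt (hF : S.frob = F) {n : ℕ} (h : F < n) : n ∈ S.carrier := by
  by_contra hn
  have := le_frob (S := S) (x := n) fun s hs hsn => hn (by rwa [← Nat.cast_inj.mp hsn])
  omega

variable (S) in
theorem zero_mem_apery : 0 ∈ S.apery :=
  ⟨S.zero_mem, fun _ _ h => S.mult_pos.ne' (Nat.add_eq_zero_iff.mp h).2⟩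

theorem mult_lt_of_mem_apery {w : ℕ} (hw : w ∈ S.apery) (h : 0 < w) : S.mult < w :=
  lt_of_le_of_ne (mult_le_of_mem hw.1 h) fun hm => hw.2 0 S.zero_mem (by omega)

theorem le_frob_add_mult_of_mem_apery (hF : S.frob = F) {w : ℕ} (hw : w ∈ S.apery) :
    w ≤ F + S.mult :=
  not_lt.mp fun h => hw.2 (w - S.mult) (mem_of_frob_lt hF (by omega)) (by omega)

theorem mem_apery_of_add_mem_apery {a b : ℕ} (ha : a ∈ S.carrier) (hb : b ∈ S.carrier)
    (hab : a + b ∈ S.apery) : a ∈ S.apery :=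
  ⟨ha, fun u hu h => hab.2 (u + b) (S.add_mem hu hb) (by omega)⟩

theorem eq_of_mem_apery_of_mod_eq {x y : ℕ} (hx : x ∈ S.apery) (hy : y ∈ S.apery)
    (h : x % S.mult = y % S.mult) : x = y := by
  wlog hyx : y ≤ x generalizing x y
  · exact (this hy hx h.symm (by omega)).symm
  obtain ⟨j, hj⟩ : S.mult ∣ x - y := (Nat.modEq_iff_dvd' hyx).mp h.symm
  rcases j with _ | j
  · omega
  · refine absurd (S.add_mem hy.1 (mul_mem j S.mult_mem)) (hx.2 _ · ?_)
    rw [Nat.mul_succ, Nat.mul_comm] at hj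
    omega

theorem exists_mem_apery_mod_eq (r : ℕ) : ∃ w ∈ S.apery, w % S.mult = r % S.mult := by
  classical
  obtain ⟨N, -, hN⟩ := S.exists_forall_le_mem
  have hex : ∃ s, s ∈ S.carrier ∧ s % S.mult = r % S.mult :=
    ⟨r + N * S.mult, hN _ (by nlinarith [S.mult_pos]), by simp⟩
  obtain ⟨hmem, hmod⟩ := Nat.find_spec hex
  refine ⟨Nat.find hex, ⟨hmem, fun u hu hum => Nat.find_min hex (m := u) ?_ ⟨hu, ?_⟩⟩, hmod⟩
  · have := S.mult_pos
    omega
  rw [← hmod, ← hum, Nat.add_mod_right]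

theorem mult_le_ncard_apery : S.mult ≤ S.apery.ncard := by
  have hsub : Set.Iio S.mult ⊆ (· % S.mult) '' S.apery := fun r hr => by
    obtain ⟨w, hw, hwr⟩ := S.exists_mem_apery_mod_eq r
    exact ⟨w, hw, hwr.trans (Nat.mod_eq_of_lt hr)⟩
  calc S.mult = (Set.Iio S.mult).ncard := by simp
    _ ≤ ((· % S.mult) '' S.apery).ncard := Set.ncard_le_ncard hsub (S.apery_finite.image _)
    _ ≤ S.apery.ncard := Set.ncard_image_le S.apery_finite

variable (S) in
def IsDecomposable (x : ℕ) : Prop :=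
  ∃ a ∈ S.carrier, ∃ b ∈ S.carrier, 0 < a ∧ 0 < b ∧ a + b = x

theorem mem_of_carrier_eq_closure {G : Set ℕ} (hG : S.carrier = AddSubmonoid.closure G)
    {x : ℕ} (hx : x ∈ S.carrier) (hx0 : 0 < x) (hind : ¬S.IsDecomposable x) : x ∈ G := by
  have key : ∀ y (hy : y ∈ AddSubmonoid.closure G), 0 < y → ¬S.IsDecomposable y → y ∈ G := by
    intro y hy
    induction hy using AddSubmonoid.closure_induction with
    | mem y hy => exact fun _ _ => hy
    | zero => exact fun h _ => absurd h (lt_irrefl 0)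
    | add a b ha hb iha ihb =>
      intro hpos hind
      rcases Nat.eq_zero_or_pos a with rfl | ha0
      · simpa using ihb (by simpa using hpos) (by simpa using hind)
      rcases Nat.eq_zero_or_pos b with rfl | hb0
      · simpa using iha (by simpa using hpos) (by simpa using hind)
      exact absurd ⟨a, hG ▸ ha, b, hG ▸ hb, ha0, hb0, rfl⟩ hind
  exact key x (show x ∈ (AddSubmonoid.closure G : Set ℕ) from hG ▸ hx) hx0 hind

variable (S) in
theorem exists_finset_carrier_eq_closure :
    ∃ G : Finset ℕ, S.carrier = AddSubmonoid.closure (G : Set ℕ) := by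
  classical
  obtain ⟨N, hN0, hN⟩ := S.exists_forall_le_mem
  set G := (Finset.range (2 * N)).filter (· ∈ S.carrier)
  refine ⟨G, Set.Subset.antisymm ?_ ?_⟩
  · intro x hx
    induction x using Nat.strong_induction_on with
    | _ x ih =>
      by_cases hx2 : x < 2 * N
      · exact AddSubmonoid.subset_closure (by simp [G, hx2, hx])
      have hN' : N ∈ AddSubmonoid.closure (G : Set ℕ) :=
        AddSubmonoid.subset_closure (by simp [G, hN N le_rfl]; omega)
      have := AddSubmonoid.add_mem _ (ih (x - N) (by omega) (hN _ (by omega))) hN'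
      rwa [Nat.sub_add_cancel (by omega)] at this
  · intro x hx
    induction hx using AddSubmonoid.closure_induction with
    | mem y hy => exact (Finset.mem_filter.mp hy).2
    | zero => exact S.zero_mem
    | add a b _ _ ha hb => exact S.add_mem ha hb

variable (S) in
theorem exists_carrier_eq_closure_card_eq_embdim :
    ∃ G : Finset ℕ, S.carrier = AddSubmonoid.closure (G : Set ℕ) ∧ G.card = S.embdim := by
  obtain ⟨G, hG⟩ := S.exists_finset_carrier_eq_closure
  exact Nat.sInf_mem (s := {n | ∃ G : Finset ℕ,
    S.carrier = (AddSubmonoid.closure (G : Set ℕ) : Set ℕ) ∧ G.card = n}) ⟨G.card, G, hG, rfl⟩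

variable (S) in
theorem mult_le_embdim_add_ncard_decomposable_apery :
    S.mult ≤ S.embdim + {w ∈ S.apery | S.IsDecomposable w}.ncard := by
  obtain ⟨G, hG, hcard⟩ := S.exists_carrier_eq_closure_card_eq_embdim
  set D := {w ∈ S.apery | S.IsDecomposable w}
  have hmG : S.mult ∈ G := mem_of_carrier_eq_closure hG S.mult_mem S.mult_pos
    fun ⟨a, ha, b, hb, ha0, hb0, hab⟩ => by
      have := mult_le_of_mem ha ha0
      have := mult_le_of_mem hb hb0
      omega
  have hsub : S.apery ⊆ insert 0 (((G : Set ℕ) \ {S.mult}) ∪ D) := by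
    intro w hw
    rcases Nat.eq_zero_or_pos w with rfl | hw0
    · exact Set.mem_insert 0 _
    by_cases hd : S.IsDecomposable w
    · exact Or.inr (Or.inr ⟨hw, hd⟩)
    · exact Or.inr (Or.inl ⟨mem_of_carrier_eq_closure hG hw.1 hw0 hd,
        (mult_lt_of_mem_apery hw hw0).ne'⟩)
  have hfin : (((G : Set ℕ) \ {S.mult}) ∪ D).Finite :=
    G.finite_toSet.sdiff.union (S.apery_finite.subset (Set.sep_subset _ _))
  calc S.mult ≤ S.apery.ncard := S.mult_le_ncard_apery
    _ ≤ (insert 0 (((G : Set ℕ) \ {S.mult}) ∪ D)).ncard :=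
      Set.ncard_le_ncard hsub (hfin.insert 0)
    _ ≤ ((G : Set ℕ) \ {S.mult}).ncard + D.ncard + 1 :=
      (Set.ncard_insert_le _ _).trans (by gcongr; exact Set.ncard_union_le _ _)
    _ = S.embdim + D.ncard := by
      rw [Set.ncard_sdiff_singleton_of_mem (by simpa using hmG), Set.ncard_coe_finset, hcard]
      have := Finset.card_pos.mpr ⟨_, hmG⟩
      omega

open Pointwise in
theorem decomposable_apery_subset_add (hF : S.frob = F) :
    {w ∈ S.apery | S.IsDecomposable w} ⊆
      {w ∈ S.apery | 0 < w ∧ w < F} + {w ∈ S.apery | 0 < w ∧ w < F} := by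
  rintro _ ⟨hw, a, ha, b, hb, ha0, hb0, rfl⟩
  have haA := mem_apery_of_add_mem_apery ha hb hw
  have hbA := mem_apery_of_add_mem_apery hb ha (add_comm a b ▸ hw)
  have := le_frob_add_mult_of_mem_apery hF hw
  have := mult_lt_of_mem_apery haA ha0
  have := mult_lt_of_mem_apery hbA hb0
  exact ⟨a, ⟨haA, ha0, by omega⟩, b, ⟨hbA, hb0, by omega⟩, rfl⟩

theorem ncard_decomposable_apery_le_choose (hF : S.frob = F) :
    {w ∈ S.apery | S.IsDecomposable w}.ncard ≤
      ({w ∈ S.apery | 0 < w ∧ w < F}.ncard + 1).choose 2 := by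
  have hfin : {w ∈ S.apery | 0 < w ∧ w < F}.Finite := S.apery_finite.subset (Set.sep_subset _ _)
  open Pointwise in
  exact (Set.ncard_le_ncard (decomposable_apery_subset_add hF) (hfin.add hfin)).trans
    (Set.ncard_add_self_le hfin)

variable (S) in
def frobWindow : Set ℕ :=
  {x | x ∈ S.carrier ∧ S.frob < x + S.mult ∧ (x : ℤ) < S.frob}

theorem mem_frobWindow (hF : S.frob = F) {x : ℕ} :
    x ∈ S.frobWindow ↔ x ∈ S.carrier ∧ F < x + S.mult ∧ x < F := by
  simp only [frobWindow, Set.mem_ofPred_eq, hF]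
  norm_cast

theorem ncard_apery_pos_lt_frob_add_one_le (hF : S.frob = F) :
    {w ∈ S.apery | 0 < w ∧ w < F}.ncard + 1 ≤ S.frobWindow.ncard := by
  set B := {w ∈ S.apery | 0 < w ∧ w < F}
  have hF0 : 0 < F := Nat.pos_of_ne_zero fun h => natCast_frob_not_mem hF (h ▸ S.zero_mem)
  -- move each Apéry element below `F` into the window, within its residue class
  let φ : ℕ → ℕ := fun w => w + (F - w) / S.mult * S.mult
  have hmaps : ∀ w ∈ insert 0 B, φ w ∈ S.frobWindow := by
    rintro w hw
    obtain ⟨hwA, hwF⟩ : w ∈ S.apery ∧ w < F := by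
      rcases hw with rfl | ⟨hwA, -, hwF⟩
      exacts [⟨S.zero_mem_apery, hF0⟩, ⟨hwA, hwF⟩]
    have hφS : φ w ∈ S.carrier := S.add_mem hwA.1 (mul_mem _ S.mult_mem)
    have := Nat.div_mul_le_self (F - w) S.mult
    have := Nat.lt_div_mul_add (a := F - w) S.mult_pos
    have : φ w ≠ F := fun h => natCast_frob_not_mem hF (h ▸ hφS)
    simp only [φ] at this ⊢
    exact (mem_frobWindow hF).mpr ⟨hφS, by omega, by omega⟩
  have hinj : Set.InjOn φ (insert 0 B) := by
    intro a ha b hb hab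
    have hA : ∀ w ∈ insert 0 B, w ∈ S.apery := by
      rintro w (rfl | hw)
      exacts [S.zero_mem_apery, hw.1]
    refine eq_of_mem_apery_of_mod_eq (hA a ha) (hA b hb) ?_
    simpa [φ, Nat.add_mul_mod_self_right] using congrArg (· % S.mult) hab
  have hTfin : S.frobWindow.Finite :=
    (Set.finite_Iio F).subset fun x hx => ((mem_frobWindow hF).mp hx).2.2
  calc B.ncard + 1 = (insert 0 B).ncard :=
        (Set.ncard_insert_of_notMem (fun h => h.2.1.false)
          (S.apery_finite.subset (Set.sep_subset _ _))).symm
    _ ≤ S.frobWindow.ncard := Set.ncard_le_ncard_of_injOn φ hmaps hinj hTfin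

theorem nk_eq_ncard (hF : S.frob = F) (k : ℕ) :
    S.nk k = {s | s ∈ S.carrier ∧ k * S.mult ≤ s ∧ s < (k + 1) * S.mult ∧ s < F}.ncard := by
  simp only [nk, interval, Set.mem_inter_iff, Set.mem_Ico, hF, Nat.cast_lt, and_assoc]

theorem frob_lt_of_nk_eq_one (hF : S.frob = F) (h1 : S.nk (F / S.mult) = 1) {s : ℕ}
    (hs : s ∈ S.carrier) (hLs : F / S.mult * S.mult < s) : F < s := by
  rw [nk_eq_ncard hF] at h1
  obtain ⟨a, ha⟩ := Set.ncard_eq_one.mp h1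
  have hle := Nat.div_mul_le_self F S.mult
  have hlt := Nat.lt_div_mul_add (a := F) S.mult_pos
  have hLmS : F / S.mult * S.mult ∈ S.carrier := mul_mem _ S.mult_mem
  have hLm : F / S.mult * S.mult ≠ F := fun h => natCast_frob_not_mem hF (h ▸ hLmS)
  have hsF : s ≠ F := fun h => natCast_frob_not_mem hF (h ▸ hs)
  have hmem_eq : ∀ x ∈ S.carrier, F / S.mult * S.mult ≤ x → x < F → x = a :=
    fun x hx h h' =>
      Set.mem_singleton_iff.mp (ha ▸ ⟨hx, h, by rw [Nat.succ_mul]; omega, h'⟩)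
  by_contra hsle
  have := hmem_eq _ hLmS le_rfl (by omega)
  have := hmem_eq s hs hLs.le (by omega)
  omega

theorem ncard_frobWindow_add_frob_le (hF : S.frob = F) (h1 : S.nk (F / S.mult) = 1) :
    S.frobWindow.ncard + F ≤ F / S.mult * S.mult + S.mult := by
  have hsub : S.frobWindow ⊆ Set.Ico (F + 1 - S.mult) (F / S.mult * S.mult + 1) :=
    fun x hx => by
      obtain ⟨hxS, hxm, hxF⟩ := (mem_frobWindow hF).mp hx
      have := mt (frob_lt_of_nk_eq_one hF h1 hxS) (by omega)
      exact ⟨by omega, by omega⟩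
  have hcard := Set.ncard_le_ncard hsub
  have := Nat.lt_div_mul_add (a := F) S.mult_pos
  rw [Set.ncard_Ico_nat] at hcard
  omega

theorem nk_pred_eq_ncard_frobWindow (hF : S.frob = F) (h1 : S.nk (F / S.mult) = 1)
    (hL : 0 < F / S.mult) : S.nk (F / S.mult - 1) = S.frobWindow.ncard := by
  obtain ⟨k, hk⟩ : ∃ k, F / S.mult = k + 1 := ⟨F / S.mult - 1, by omega⟩
  have hle := Nat.div_mul_le_self F S.mult
  have hlt := Nat.lt_div_mul_add (a := F) S.mult_pos
  rw [hk, Nat.succ_mul] at hle hlt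
  have hLmT : (k + 1) * S.mult ∈ S.frobWindow := by
    have hLmS : (k + 1) * S.mult ∈ S.carrier := mul_mem _ S.mult_mem
    have hLm : (k + 1) * S.mult ≠ F := fun h => natCast_frob_not_mem hF (h ▸ hLmS)
    rw [Nat.succ_mul] at hLmS hLm ⊢
    exact (mem_frobWindow hF).mpr ⟨hLmS, by omega, by omega⟩
  -- with `L = k + 1`: `I_{L-1} ∩ S` is `(L-1)m` together with the window minus `Lm`
  have hset : {s | s ∈ S.carrier ∧ k * S.mult ≤ s ∧ s < (k + 1) * S.mult ∧ s < F} =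
      insert (k * S.mult) (S.frobWindow \ {(k + 1) * S.mult}) := by
    ext x
    simp only [Set.mem_ofPred_eq, Set.mem_insert_iff, Set.mem_sdiff, Set.mem_singleton_iff,
      mem_frobWindow hF, Nat.succ_mul]
    constructor
    · rintro ⟨hxS, hkx, hxk, hxF⟩
      rcases hkx.eq_or_lt with rfl | hkx
      · exact Or.inl rfl
      have := frob_lt_of_nk_eq_one hF h1 (S.add_mem hxS S.mult_mem)
        (by rw [hk, Nat.succ_mul]; omega)
      exact Or.inr ⟨⟨hxS, by omega, hxF⟩, by omega⟩
    · rintro (rfl | ⟨⟨hxS, hxm, hxF⟩, hxL⟩)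
      · exact ⟨mul_mem _ S.mult_mem, le_rfl, by omega, by omega⟩
      have := mt (frob_lt_of_nk_eq_one hF h1 hxS) (by omega)
      rw [hk, Nat.succ_mul] at this
      exact ⟨hxS, by omega, by omega, hxF⟩
  have hTfin : S.frobWindow.Finite :=
    (Set.finite_Iio F).subset fun x hx => ((mem_frobWindow hF).mp hx).2.2
  rw [nk_eq_ncard hF, hk, Nat.add_sub_cancel, hset, Set.ncard_insert_of_notMem
    (fun h => by have := ((mem_frobWindow hF).mp h.1).2.1; omega) hTfin.sdiff,
    Set.ncard_sdiff_singleton_add_one hLmT hTfin]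

/-- If `m(S) - ν(S) ≥ 3` and `n_L = 1`, then either `n_{L-1} ≥ 4`, or
`n_{L-1} = 3`, `m(S) - ν(S) = 3` and `ρ ≤ m(S) - 2`. -/
theorem nL_eq_one_cases (S : NumericalSemigroup)
    (h : 3 ≤ S.mult - S.embdim) (h1 : S.nk S.Lindex.toNat = 1) :
    4 ≤ S.nk (S.Lindex - 1).toNat ∨
      (S.nk (S.Lindex - 1).toNat = 3 ∧ S.mult - S.embdim = 3 ∧
        S.rho ≤ (S.mult : ℤ) - 2) := by
  obtain ⟨F, hF⟩ := S.exists_frob_eq_natCast (by omega)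
  have hL : S.Lindex = (F / S.mult : ℕ) := by rw [Lindex, hF]; norm_cast
  rw [hL, Int.toNat_natCast] at h1
  set B := {w ∈ S.apery | 0 < w ∧ w < F}
  have hD : S.mult - S.embdim ≤ (B.ncard + 1).choose 2 := by
    have := S.mult_le_embdim_add_ncard_decomposable_apery
    have : _ ≤ (B.ncard + 1).choose 2 := ncard_decomposable_apery_le_choose hF
    omega
  have hB2 : 2 ≤ B.ncard := by
    by_contra! hB
    have := Nat.choose_le_choose 2 (show B.ncard + 1 ≤ 2 by omega)
    rw [Nat.choose_self] at this
    omega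
  obtain ⟨b, hbA, hb0, hbF⟩ := (Set.ncard_pos (S.apery_finite.subset (Set.sep_subset _ _))).mp
    (by omega : 0 < B.ncard)
  have hLpos : 0 < F / S.mult :=
    Nat.div_pos ((mult_lt_of_mem_apery hbA hb0).trans hbF).le S.mult_pos
  have hT : B.ncard + 1 ≤ S.frobWindow.ncard := ncard_apery_pos_lt_frob_add_one_le hF
  have hρ := ncard_frobWindow_add_frob_le hF h1
  rw [show (S.Lindex - 1).toNat = F / S.mult - 1 by omega, nk_pred_eq_ncard_frobWindow hF h1 hLpos]
  rcases (show 4 ≤ S.frobWindow.ncard ∨ S.frobWindow.ncard = 3 by omega) with h4 | h3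
  · exact Or.inl h4
  · rw [show B.ncard = 2 by omega] at hD
    refine Or.inr ⟨h3, le_antisymm hD h, ?_⟩
    rw [rho, hL, hF]
    omega

end NumericalSemigroup
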